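/- Let Ω ⊂ ℝⁿ be open, V compactly contained in Ω, α ∈ (1/2, 1), and f, g, h ∈ C^{0,α}(Ω). Then ‖(fgh)_ε − f_ε g_ε h_ε‖_{C^1(V)} ≤ C ε^{2α−1}, where C depends only on the C^{0,α} norms of f, g, h on Ω and subscript ε denotes mollification with a standard mollifier at scale ε. -/

import Mathlib

open MeasureTheory Metric Set
open scoped Convolution

noncomputable section

/-- Euclidean space `ℝⁿ`. -/
abbrev En (n : ℕ) := EuclideanSpace ℝ (Fin n)

/-- `ψ` is a standard mollifier. -/
def IsStdMollifier {n : ℕ} (ψ : En n → ℝ) : Prop :=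
  ContDiff ℝ (⊤ : ℕ∞) ψ ∧ (∀ x, 0 ≤ ψ x) ∧ tsupport ψ ⊆ Metric.ball 0 1 ∧ (∫ x, ψ x) = 1

/-- The mollification `f_ε = f * ψ_ε` at scale `ε`, `ψ_ε(x) = ε⁻ⁿ ψ(x/ε)`. -/
def mollify {n : ℕ} (ψ : En n → ℝ) (ε : ℝ) (f : En n → ℝ) (x : En n) : ℝ :=
  ∫ y in Metric.ball x ε, (ε ^ n)⁻¹ * ψ (ε⁻¹ • (x - y)) * f y

/-- `a ∈ C^{0,α}(Ω)` with norm at most `M`. -/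
def HolderBnd {n : ℕ} (Ω : Set (En n)) (α M : ℝ) (a : En n → ℝ) : Prop :=
  (∀ x ∈ Ω, |a x| ≤ M) ∧ ∀ x ∈ Ω, ∀ y ∈ Ω, |a x - a y| ≤ M * ‖x - y‖ ^ α

namespace MollAux
variable {n : ℕ} {ψ : En n → ℝ} {ε : ℝ}

def phi (ψ : En n → ℝ) (ε : ℝ) (z : En n) : ℝ := (ε ^ n)⁻¹ * ψ (ε⁻¹ • z)

theorem phi_contDiff (hψ : IsStdMollifier ψ) : ContDiff ℝ (⊤ : ℕ∞) (phi ψ ε) :=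
  contDiff_const.mul (hψ.1.comp (contDiff_id.const_smul ε⁻¹))

theorem phi_nonneg (hψ : IsStdMollifier ψ) (hε : 0 < ε) (z : En n) : 0 ≤ phi ψ ε z :=
  mul_nonneg (inv_nonneg.2 (pow_nonneg hε.le _)) (hψ.2.1 _)

theorem support_phi (hψ : IsStdMollifier ψ) (hε : 0 < ε) :
    Function.support (phi ψ ε) ⊆ ball (0 : En n) ε := by
  intro z hz
  have hz' : ψ (ε⁻¹ • z) ≠ 0 := by
    intro h; apply hz; simp [phi, h]
  have h1 : ε⁻¹ • z ∈ ball (0 : En n) 1 :=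
    hψ.2.2.1 (subset_tsupport _ hz')
  simp only [mem_ball, dist_zero_right] at h1 ⊢
  have : ‖ε⁻¹ • z‖ = ε⁻¹ * ‖z‖ := by
    rw [norm_smul, Real.norm_eq_abs, abs_of_pos (inv_pos.2 hε)]
  rw [this] at h1
  calc ‖z‖ = ε * (ε⁻¹ * ‖z‖) := by field_simp
  _ < ε * 1 := by exact mul_lt_mul_of_pos_left h1 hε
  _ = ε := mul_one ε

theorem tsupport_phi (hψ : IsStdMollifier ψ) (hε : 0 < ε) :
    tsupport (phi ψ ε) ⊆ closedBall (0 : En n) ε := by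
  rw [tsupport, ← closure_ball (0 : En n) hε.ne']
  exact closure_mono (support_phi hψ hε)

theorem hasCompactSupport_phi (hψ : IsStdMollifier ψ) (hε : 0 < ε) :
    HasCompactSupport (phi ψ ε) :=
  HasCompactSupport.intro (isCompact_closedBall _ _)
    (fun z hz => image_eq_zero_of_notMem_tsupport (fun h => hz (tsupport_phi hψ hε h)))

theorem integral_phi (hψ : IsStdMollifier ψ) (hε : 0 < ε) : ∫ z, phi ψ ε z = 1 := by
  simp only [phi]
  rw [integral_const_mul, Measure.integral_comp_inv_smul volume ψ ε,
    finrank_euclideanSpace_fin, hψ.2.2.2]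
  have : |ε ^ n| = ε ^ n := abs_of_pos (pow_pos hε n)
  simp [this, smul_eq_mul]
  field_simp

theorem fderiv_phi (hψ : IsStdMollifier ψ) (z : En n) :
    fderiv ℝ (phi ψ ε) z = ((ε ^ n)⁻¹ * ε⁻¹) • fderiv ℝ ψ (ε⁻¹ • z) := by
  have hl : HasFDerivAt (fun w : En n => ε⁻¹ • w)
      (ε⁻¹ • ContinuousLinearMap.id ℝ (En n)) z :=
    (ContinuousLinearMap.id ℝ (En n)).hasFDerivAt.const_smul ε⁻¹
  have hψd : HasFDerivAt ψ (fderiv ℝ ψ (ε⁻¹ • z)) (ε⁻¹ • z) :=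
    (hψ.1.differentiable (by simp)).differentiableAt.hasFDerivAt
  have h2 : HasFDerivAt (fun w : En n => ψ (ε⁻¹ • w))
      ((fderiv ℝ ψ (ε⁻¹ • z)).comp (ε⁻¹ • ContinuousLinearMap.id ℝ (En n))) z :=
    hψd.comp z hl
  have h3 := h2.const_mul ((ε ^ n)⁻¹)
  have : phi ψ ε = fun w => (ε ^ n)⁻¹ * ψ (ε⁻¹ • w) := rfl
  rw [this, h3.fderiv]
  ext v
  simp [smul_smul, mul_comm]

theorem integral_norm_fderiv_phi (hψ : IsStdMollifier ψ) (hε : 0 < ε) :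
    ∫ z, ‖fderiv ℝ (phi ψ ε) z‖ = ε⁻¹ * ∫ z, ‖fderiv ℝ ψ z‖ := by
  have h1 : ∀ z : En n, ‖fderiv ℝ (phi ψ ε) z‖
      = ((ε ^ n)⁻¹ * ε⁻¹) * ‖fderiv ℝ ψ (ε⁻¹ • z)‖ := by
    intro z
    rw [fderiv_phi hψ, norm_smul, Real.norm_eq_abs, abs_of_pos]
    positivity
  simp only [h1]
  rw [integral_const_mul, Measure.integral_comp_inv_smul volume
    (fun z => ‖fderiv ℝ ψ z‖) ε, finrank_euclideanSpace_fin]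
  rw [abs_of_pos (pow_pos hε n), smul_eq_mul]
  field_simp


theorem holder_continuousOn {Ω : Set (En n)} {α M : ℝ} (hα : 0 < α) {a : En n → ℝ}
    (ha : ∀ x ∈ Ω, ∀ y ∈ Ω, |a x - a y| ≤ M * ‖x - y‖ ^ α) : ContinuousOn a Ω := by
  intro x hx
  have h1 : Filter.Tendsto (fun y : En n => M * ‖y - x‖ ^ α) (nhdsWithin x Ω) (nhds 0) := by
    have h0 : Filter.Tendsto (fun y : En n => ‖y - x‖) (nhdsWithin x Ω) (nhds 0) := by
      have : Continuous (fun y : En n => ‖y - x‖) :=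
        (continuous_id.sub (continuous_const (y := x))).norm
      have h4 : Filter.Tendsto (fun y : En n => ‖y - x‖) (nhdsWithin x Ω) (nhds ‖x - x‖) :=
        this.continuousWithinAt
      simpa using h4
    have h2 : ContinuousAt (fun t : ℝ => M * t ^ α) 0 :=
      (continuousAt_const.mul (Real.continuousAt_rpow_const 0 α (Or.inr hα.le)))
    have := h2.tendsto.comp h0
    simpa [Function.comp_def, Real.zero_rpow hα.ne'] using this
  have h3 : Filter.Tendsto (fun y => a y - a x) (nhdsWithin x Ω) (nhds 0) := by
    apply squeeze_zero_norm' ?_ h1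
    filter_upwards [self_mem_nhdsWithin] with y hy
    simpa [Real.norm_eq_abs] using ha y hy x hx
  have := h3.add (tendsto_const_nhds (x := a x))
  simpa [ContinuousWithinAt] using this

theorem key (hψ : IsStdMollifier ψ)
    {Ω K : Set (En n)} (hKc : IsClosed K) (hKcomp : IsCompact K) (hKΩ : K ⊆ Ω)
    {α N : ℝ} (hα0 : 0 < α) (hN : 0 ≤ N)
    {a : En n → ℝ} (ha : HolderBnd Ω α N a)
    (hε : 0 < ε)
    {x : En n} (hxΩ : x ∈ Ω) {r : ℝ} (hr : 0 < r)
    (hxK : ∀ z ∈ ball x r, closedBall z ε ⊆ K) :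
    |mollify ψ ε a x| ≤ N ∧
    |mollify ψ ε a x - a x| ≤ N * ε ^ α ∧
    Integrable (fun t => (K.indicator a t - a x) • fderiv ℝ (phi ψ ε) (x - t)) ∧
    HasFDerivAt (mollify ψ ε a)
      (∫ t, (K.indicator a t - a x) • fderiv ℝ (phi ψ ε) (x - t)) x := by
  set φ := phi ψ ε with hφdef
  set aK := K.indicator a with haKdef
  have hφc : Continuous φ := (phi_contDiff hψ).continuous
  have hcs : HasCompactSupport φ := hasCompactSupport_phi hψ hε
  have hcont : ContinuousOn a Ω := holder_continuousOn hα0 ha.2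
  have hInd : Integrable aK := by
    rw [haKdef, integrable_indicator_iff hKc.measurableSet]
    exact (hcont.mono hKΩ).integrableOn_compact hKcomp
  have haKbdd : ∀ t, |aK t| ≤ N := by
    intro t
    by_cases ht : t ∈ K
    · rw [haKdef, Set.indicator_of_mem ht]; exact ha.1 t (hKΩ ht)
    · rw [haKdef, Set.indicator_of_notMem ht]; simpa using hN
  set L := ContinuousLinearMap.mul ℝ ℝ with hLdef
  -- representation of mollify as convolution on ball x r
  have hrep : ∀ z ∈ ball x r, mollify ψ ε a z = (aK ⋆[L, volume] φ) z := by
    intro z hz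
    rw [convolution_def]
    simp only [hLdef, ContinuousLinearMap.mul_apply']
    have h1 : mollify ψ ε a z = ∫ y in ball z ε, aK y * φ (z - y) := by
      rw [mollify]
      apply setIntegral_congr_fun measurableSet_ball
      intro y hy
      have hyK : y ∈ K := hxK z hz (ball_subset_closedBall hy)
      simp only [haKdef, Set.indicator_of_mem hyK, hφdef, phi]
      ring
    rw [h1]
    apply setIntegral_eq_integral_of_forall_compl_eq_zero
    intro y hy
    have : φ (z - y) = 0 := by
      by_contra h
      apply hy
      have h2 : z - y ∈ Function.support φ := h
      have h3 := support_phi hψ hε h2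
      simp only [mem_ball, dist_zero_right] at h3
      simp only [mem_ball, dist_eq_norm]
      rw [norm_sub_rev]
      simpa using h3
    simp [this]
  have hxball : x ∈ ball x r := mem_ball_self hr
  have hval : mollify ψ ε a x = ∫ t, aK t * φ (x - t) := by
    rw [hrep x hxball, convolution_def]
    simp only [hLdef, ContinuousLinearMap.mul_apply']
  have hφxcs : HasCompactSupport (fun t => φ (x - t)) :=
    hcs.comp_homeomorph (Homeomorph.subLeft x)
  have hφxc : Continuous fun t => φ (x - t) :=
    hφc.comp (continuous_const.sub continuous_id)
  have hφxint : Integrable (fun t => φ (x - t)) :=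
    hφxc.integrable_of_hasCompactSupport hφxcs
  have hφx1 : (∫ t, φ (x - t)) = 1 := by
    rw [integral_sub_left_eq_self φ volume x]; exact integral_phi hψ hε
  have hmul_int : Integrable (fun t => aK t * φ (x - t)) := by
    have hb : ∃ C, ∀ t, ‖φ (x - t)‖ ≤ C :=
      hφxcs.exists_bound_of_continuous hφxc
    have := hInd.bdd_mul (f := fun t => φ (x - t)) hφxc.aestronglyMeasurable (Filter.Eventually.of_forall hb.choose_spec)
    simpa [mul_comm] using this
  -- ball x ε ⊆ K and membership facts
  have hballK : closedBall x ε ⊆ K := hxK x hxball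
  have hsupp_mem : ∀ t : En n, φ (x - t) ≠ 0 → t ∈ K ∧ ‖t - x‖ < ε := by
    intro t h
    have h3 := support_phi hψ hε (h : x - t ∈ Function.support φ)
    simp only [mem_ball, dist_zero_right] at h3
    have h4 : ‖t - x‖ < ε := by rw [norm_sub_rev]; exact h3
    exact ⟨hballK (by simpa [mem_closedBall, dist_eq_norm] using h4.le), h4⟩
  -- part 1 : |mollify| ≤ N
  have part1 : |mollify ψ ε a x| ≤ N := by
    rw [hval, ← Real.norm_eq_abs]
    have hle : ∀ t, ‖aK t * φ (x - t)‖ ≤ N * φ (x - t) := by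
      intro t
      rw [norm_mul, Real.norm_eq_abs, Real.norm_eq_abs,
        abs_of_nonneg (phi_nonneg hψ hε _)]
      exact mul_le_mul_of_nonneg_right (haKbdd t) (phi_nonneg hψ hε _)
    calc ‖∫ t, aK t * φ (x - t)‖ ≤ ∫ t, N * φ (x - t) :=
          norm_integral_le_of_norm_le (hφxint.const_mul N)
            (Filter.Eventually.of_forall hle)
    _ = N := by rw [integral_const_mul, hφx1, mul_one]
  -- part 2 : closeness
  have part2 : |mollify ψ ε a x - a x| ≤ N * ε ^ α := by
    have heps : mollify ψ ε a x - a x = ∫ t, (aK t - a x) * φ (x - t) := by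
      rw [hval]
      rw [show (∫ t, (aK t - a x) * φ (x - t))
          = ∫ t, (aK t * φ (x - t) - a x * φ (x - t)) by congr 1; ext t; ring]
      rw [integral_sub hmul_int (hφxint.const_mul (a x)), integral_const_mul, hφx1,
        mul_one]
    rw [heps, ← Real.norm_eq_abs]
    have hle : ∀ t, ‖(aK t - a x) * φ (x - t)‖ ≤ (N * ε ^ α) * φ (x - t) := by
      intro t
      by_cases h : φ (x - t) = 0
      · simp [h]
      · obtain ⟨htK, htε⟩ := hsupp_mem t h
        rw [norm_mul, Real.norm_eq_abs, Real.norm_eq_abs,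
          abs_of_nonneg (phi_nonneg hψ hε _)]
        apply mul_le_mul_of_nonneg_right _ (phi_nonneg hψ hε _)
        rw [haKdef, Set.indicator_of_mem htK]
        calc |a t - a x| ≤ N * ‖t - x‖ ^ α := ha.2 t (hKΩ htK) x hxΩ
        _ ≤ N * ε ^ α := by
            apply mul_le_mul_of_nonneg_left _ hN
            exact Real.rpow_le_rpow (norm_nonneg _) htε.le hα0.le
    calc ‖∫ t, (aK t - a x) * φ (x - t)‖ ≤ ∫ t, (N * ε ^ α) * φ (x - t) :=
          norm_integral_le_of_norm_le (hφxint.const_mul _)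
            (Filter.Eventually.of_forall hle)
    _ = N * ε ^ α := by rw [integral_const_mul, hφx1, mul_one]
  -- derivative
  have hφ1 : ContDiff ℝ 1 φ := (phi_contDiff hψ).of_le (by simp)
  have hφ'c : Continuous (fderiv ℝ φ) := (phi_contDiff hψ).continuous_fderiv (by simp)
  have hφ'cs : HasCompactSupport (fderiv ℝ φ) := hcs.fderiv (𝕜 := ℝ)
  have hpre : ∀ (c : ℝ) (u : En n →L[ℝ] ℝ), (L.precompR (En n)) c u = c • u := by
    intro c u; ext v; simp [hLdef, ContinuousLinearMap.precompR]
  have hconvd := HasCompactSupport.hasFDerivAt_convolution_right L hcs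
    hInd.locallyIntegrable hφ1 x
  have hD_int : Integrable (fun t => aK t • fderiv ℝ φ (x - t)) := by
    have := HasCompactSupport.convolutionExists_right (L.precompR (En n))
      hφ'cs hInd.locallyIntegrable hφ'c x
    simpa only [ConvolutionExistsAt, hpre] using this
  have hDval : (aK ⋆[L.precompR (En n), volume] fderiv ℝ φ) x
      = ∫ t, aK t • fderiv ℝ φ (x - t) := by
    rw [convolution_def]; simp only [hpre]
  -- zero integral of fderiv φ (x - ·)
  have hzero : (∫ t, fderiv ℝ φ (x - t)) = 0 := by
    have h1 := HasCompactSupport.hasFDerivAt_convolution_right L hcs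
      (locallyIntegrable_const (μ := (volume : Measure (En n))) (1 : ℝ)) hφ1 x
    have h2 : ((fun _ : En n => (1:ℝ)) ⋆[L, volume] φ) = fun _ => (1:ℝ) := by
      ext z
      rw [convolution_def]
      simp only [hLdef, ContinuousLinearMap.mul_apply', one_mul]
      rw [integral_sub_left_eq_self φ volume z]
      exact integral_phi hψ hε
    have h3 : HasFDerivAt ((fun _ : En n => (1:ℝ)) ⋆[L, volume] φ) (0 : En n →L[ℝ] ℝ) x := by
      rw [h2]; exact hasFDerivAt_const 1 x
    have h4 := h1.unique h3
    rw [convolution_def] at h4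
    simp only [hpre, one_smul] at h4
    exact h4
  have hφ'x_int : Integrable (fun t => fderiv ℝ φ (x - t)) := by
    have hc : Continuous fun t => fderiv ℝ φ (x - t) :=
      hφ'c.comp (continuous_const.sub continuous_id)
    exact hc.integrable_of_hasCompactSupport
      (hφ'cs.comp_homeomorph (Homeomorph.subLeft x))
  have part3 : Integrable (fun t => (aK t - a x) • fderiv ℝ φ (x - t)) := by
    have hsm : Integrable (fun t => a x • fderiv ℝ φ (x - t)) := by
      exact hφ'x_int.smul (a x)
    have := hD_int.sub hsm
    simp only [sub_smul]; exact this
  have hDeq : (∫ t, (aK t - a x) • fderiv ℝ φ (x - t))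
      = ∫ t, aK t • fderiv ℝ φ (x - t) := by
    simp only [sub_smul]
    have hsm : Integrable (fun t => a x • fderiv ℝ φ (x - t)) := by
      exact hφ'x_int.smul (a x)
    rw [integral_sub hD_int hsm, integral_smul, hzero, smul_zero, sub_zero]
  have part4 : HasFDerivAt (mollify ψ ε a)
      (∫ t, (aK t - a x) • fderiv ℝ φ (x - t)) x := by
    rw [hDeq, ← hDval]
    apply hconvd.congr_of_eventuallyEq
    filter_upwards [isOpen_ball.mem_nhds hxball] with z hz
    exact hrep z hz
  exact ⟨part1, part2, part3, part4⟩

theorem abs_mul_le' {a b A B : ℝ} (ha : |a| ≤ A) (hb : |b| ≤ B) : |a * b| ≤ A * B := by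
  rw [abs_mul]; exact mul_le_mul ha hb (abs_nonneg b) ((abs_nonneg a).trans ha)

theorem holder_mul3 {Ω : Set (En n)} {α M : ℝ} (hM : 0 ≤ M) {f g h : En n → ℝ}
    (hf : HolderBnd Ω α M f) (hg : HolderBnd Ω α M g) (hh : HolderBnd Ω α M h) :
    HolderBnd Ω α (3 * M ^ 3) (fun y => f y * g y * h y) := by
  constructor
  · intro x hx
    have := abs_mul_le' (abs_mul_le' (hf.1 x hx) (hg.1 x hx)) (hh.1 x hx)
    calc |f x * g x * h x| ≤ M * M * M := this
    _ ≤ 3 * M ^ 3 := by nlinarith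
  · intro x hx y hy
    have hid : f x * g x * h x - f y * g y * h y
        = (f x - f y) * (g x * h x) + f y * ((g x - g y) * h x)
          + (f y * g y) * (h x - h y) := by ring
    have hd : 0 ≤ ‖x - y‖ ^ α := Real.rpow_nonneg (norm_nonneg _) α
    calc |f x * g x * h x - f y * g y * h y|
        ≤ |(f x - f y) * (g x * h x)| + |f y * ((g x - g y) * h x)|
          + |(f y * g y) * (h x - h y)| := by
          rw [hid]; exact (abs_add_le _ _).trans (by gcongr; exact abs_add_le _ _)
    _ ≤ (M * ‖x - y‖ ^ α) * (M * M) + M * ((M * ‖x - y‖ ^ α) * M)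
          + (M * M) * (M * ‖x - y‖ ^ α) := by
          gcongr ?_ + ?_ + ?_
          · exact abs_mul_le' (hf.2 x hx y hy) (abs_mul_le' (hg.1 x hx) (hh.1 x hx))
          · exact abs_mul_le' (hf.1 y hy) (abs_mul_le' (hg.2 x hx y hy) (hh.1 x hx))
          · exact abs_mul_le' (abs_mul_le' (hf.1 y hy) (hg.1 y hy)) (hh.2 x hx y hy)
    _ = 3 * M ^ 3 * ‖x - y‖ ^ α := by ring


end MollAux

open MollAux

set_option maxHeartbeats 1600000

/-- for `Ω ⊆ ℝⁿ` open, `V ⋐ Ω`, `α ∈ (1/2, 1)` and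
`f, g, h ∈ C^{0,α}(Ω)` with Hölder norms at most `M`, the triple commutator
satisfies `‖(fgh)_ε − f_ε g_ε h_ε‖_{C¹(V)} ≤ C ε^{2α−1}` for all small `ε > 0`
(both the sup norm and the sup norm of the gradient on `V` are bounded by
`C ε^{2α−1}`), with `C = C(M)` depending only on the Hölder norms. -/
theorem mollification_triple_commutator_estimate
    (n : ℕ) (hn : 0 < n) (Ω V : Set (En n)) (hΩ : IsOpen Ω)
    (hV : IsCompact (closure V)) (hVΩ : closure V ⊆ Ω)
    (α : ℝ) (hα : 1/2 < α ∧ α < 1)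
    (ψ : En n → ℝ) (hψ : IsStdMollifier ψ) (M : ℝ) (hM : 0 ≤ M) :
    ∃ C : ℝ, 0 ≤ C ∧ ∃ ε₀ : ℝ, 0 < ε₀ ∧
      ∀ f g h : En n → ℝ,
        HolderBnd Ω α M f → HolderBnd Ω α M g → HolderBnd Ω α M h →
        ∀ ε : ℝ, 0 < ε → ε < ε₀ → ∀ x ∈ V,
          |mollify ψ ε (fun y => f y * g y * h y) x
              - mollify ψ ε f x * mollify ψ ε g x * mollify ψ ε h x|
            ≤ C * ε ^ (2 * α - 1) ∧
          ‖fderiv ℝ (fun z =>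
              mollify ψ ε (fun y => f y * g y * h y) z
                - mollify ψ ε f z * mollify ψ ε g z * mollify ψ ε h z) x‖
            ≤ C * ε ^ (2 * α - 1) := by
  obtain ⟨hα1, hα2⟩ := hα
  have hα0 : 0 < α := lt_trans (by norm_num) hα1
  obtain ⟨δ, δpos, hδ⟩ := hV.exists_cthickening_subset_open hΩ hVΩ
  set K := Metric.cthickening δ (closure V) with hKdef
  have hKc : IsClosed K := Metric.isClosed_cthickening
  have hKcomp : IsCompact K := hV.cthickening
  have hKΩ : K ⊆ Ω := hδ
  set Cψ := ∫ z, ‖fderiv ℝ ψ z‖ with hCψdef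
  have hCψ : 0 ≤ Cψ := integral_nonneg (fun z => norm_nonneg _)
  refine ⟨6 * M ^ 3 + 9 * M ^ 3 * Cψ, by positivity, min (δ/2) 1, by positivity, ?_⟩
  intro f g h hf hg hh ε hε hεlt x hxV
  have hε1 : ε ≤ 1 := le_of_lt (lt_of_lt_of_le hεlt (min_le_right _ _))
  have hεδ : ε < δ/2 := lt_of_lt_of_le hεlt (min_le_left _ _)
  have hxcl : x ∈ closure V := subset_closure hxV
  have hxΩ : x ∈ Ω := hVΩ hxcl
  have hr : 0 < δ/2 := by linarith
  have hxK : ∀ z ∈ ball x (δ/2), closedBall z ε ⊆ K := by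
    intro z hz y hy
    apply Metric.mem_cthickening_of_dist_le y x δ _ hxcl
    calc dist y x ≤ dist y z + dist z x := dist_triangle _ _ _
    _ ≤ ε + δ/2 := add_le_add (mem_closedBall.1 hy) (le_of_lt (mem_ball.1 hz))
    _ ≤ δ := by linarith
  have hM3 : (0:ℝ) ≤ 3 * M ^ 3 := by positivity
  have hfgh : HolderBnd Ω α (3 * M ^ 3) (fun y => f y * g y * h y) :=
    holder_mul3 hM hf hg hh
  obtain ⟨Pf1, Pf2, Pf3, Pf4⟩ := key hψ hKc hKcomp hKΩ hα0 hM hf hε hxΩ hr hxK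
  obtain ⟨Pg1, Pg2, Pg3, Pg4⟩ := key hψ hKc hKcomp hKΩ hα0 hM hg hε hxΩ hr hxK
  obtain ⟨Ph1, Ph2, Ph3, Ph4⟩ := key hψ hKc hKcomp hKΩ hα0 hM hh hε hxΩ hr hxK
  obtain ⟨Q1, Q2, Q3, Q4⟩ := key hψ hKc hKcomp hKΩ hα0 hM3 hfgh hε hxΩ hr hxK
  set u := ε ^ α with hudef
  have hu0 : 0 ≤ u := Real.rpow_nonneg hε.le α
  have hεα1 : u ≤ ε ^ (2*α - 1) :=
    Real.rpow_le_rpow_of_exponent_ge hε hε1 (by linarith)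
  have hε2α : 0 ≤ ε ^ (2*α - 1) := Real.rpow_nonneg hε.le _
  set F := mollify ψ ε f x
  set G := mollify ψ ε g x
  set H := mollify ψ ε h x
  constructor
  · -- sup bound
    have h1 : |mollify ψ ε (fun y => f y * g y * h y) x - f x * g x * h x|
        ≤ 3 * M ^ 3 * u := Q2
    have h2 : |f x * g x * h x - F * G * H| ≤ 3 * M ^ 3 * u := by
      have hid : f x * g x * h x - F * G * H
          = (f x - F) * (g x * h x) + F * ((g x - G) * h x) + (F * G) * (h x - H) := by
        ring
      calc |f x * g x * h x - F * G * H|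
          ≤ |(f x - F) * (g x * h x)| + |F * ((g x - G) * h x)|
            + |(F * G) * (h x - H)| := by
            rw [hid]; exact (abs_add_le _ _).trans (by gcongr; exact abs_add_le _ _)
      _ ≤ (M * u) * (M * M) + M * ((M * u) * M) + (M * M) * (M * u) := by
            gcongr ?_ + ?_ + ?_
            · exact abs_mul_le' (by rw [abs_sub_comm]; exact Pf2)
                (abs_mul_le' (hg.1 x hxΩ) (hh.1 x hxΩ))
            · exact abs_mul_le' Pf1
                (abs_mul_le' (by rw [abs_sub_comm]; exact Pg2) (hh.1 x hxΩ))
            · exact abs_mul_le' (abs_mul_le' Pf1 Pg1) (by rw [abs_sub_comm]; exact Ph2)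
      _ = 3 * M ^ 3 * u := by ring
    calc |mollify ψ ε (fun y => f y * g y * h y) x - F * G * H|
        ≤ |mollify ψ ε (fun y => f y * g y * h y) x - f x * g x * h x|
          + |f x * g x * h x - F * G * H| := abs_sub_le _ _ _
    _ ≤ 3 * M ^ 3 * u + 3 * M ^ 3 * u := add_le_add h1 h2
    _ = 6 * M ^ 3 * u := by ring
    _ ≤ 6 * M ^ 3 * ε ^ (2*α - 1) := by gcongr
    _ ≤ (6 * M ^ 3 + 9 * M ^ 3 * Cψ) * ε ^ (2*α - 1) := by
          nlinarith [mul_nonneg (mul_nonneg (mul_nonneg (by norm_num : (0:ℝ) ≤ 9)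
            (pow_nonneg hM 3)) hCψ) hε2α]
  · -- gradient bound
    set φ := phi ψ ε with hφdef
    set Φ' := fun t => fderiv ℝ φ (x - t) with hΦdef
    have hφ'c : Continuous (fderiv ℝ φ) :=
      (phi_contDiff hψ).continuous_fderiv (by simp)
    have hφ'cs : HasCompactSupport (fderiv ℝ φ) :=
      (hasCompactSupport_phi hψ hε).fderiv (𝕜 := ℝ)
    have hΦint : Integrable Φ' := by
      have hc : Continuous Φ' := hφ'c.comp (continuous_const.sub continuous_id)
      exact hc.integrable_of_hasCompactSupport
        (hφ'cs.comp_homeomorph (Homeomorph.subLeft x))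
    have hnorm_int : Integrable (fun t => ‖Φ' t‖) := hΦint.norm
    set Df := ∫ t, (K.indicator f t - f x) • Φ' t with hDfdef
    set Dg := ∫ t, (K.indicator g t - g x) • Φ' t with hDgdef
    set Dh := ∫ t, (K.indicator h t - h x) • Φ' t with hDhdef
    set Dq := ∫ t, (K.indicator (fun y => f y * g y * h y) t
        - f x * g x * h x) • Φ' t with hDqdef
    have hT : HasFDerivAt (fun z =>
        mollify ψ ε (fun y => f y * g y * h y) z
          - mollify ψ ε f z * mollify ψ ε g z * mollify ψ ε h z)
        (Dq - ((F * G) • Dh + H • (F • Dg + G • Df))) x :=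
      Q4.sub ((Pf4.mul Pg4).mul Ph4)
    rw [hT.fderiv]
    -- combine into a single integral
    have i1 : Integrable (fun t => ((F * G) * (K.indicator h t - h x)) • Φ' t) := by
      have h0 := Ph3.smul (F * G)
      have he : ((F * G) • fun t => (K.indicator h t - h x) • Φ' t)
          = fun t => ((F * G) * (K.indicator h t - h x)) • Φ' t := by
        ext t; simp [smul_smul]
      rwa [he] at h0
    have i2 : Integrable (fun t => ((H * F) * (K.indicator g t - g x)) • Φ' t) := by
      have h0 := Pg3.smul (H * F)
      have he : ((H * F) • fun t => (K.indicator g t - g x) • Φ' t)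
          = fun t => ((H * F) * (K.indicator g t - g x)) • Φ' t := by
        ext t; simp [smul_smul]
      rwa [he] at h0
    have i3 : Integrable (fun t => ((H * G) * (K.indicator f t - f x)) • Φ' t) := by
      have h0 := Pf3.smul (H * G)
      have he : ((H * G) • fun t => (K.indicator f t - f x) • Φ' t)
          = fun t => ((H * G) * (K.indicator f t - f x)) • Φ' t := by
        ext t; simp [smul_smul]
      rwa [he] at h0
    have e1 : (F * G) • Dh = ∫ t, ((F * G) * (K.indicator h t - h x)) • Φ' t := by
      rw [hDhdef, ← integral_smul]
      congr 1; ext t; rw [smul_smul]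
    have e2 : (H * F) • Dg = ∫ t, ((H * F) * (K.indicator g t - g x)) • Φ' t := by
      rw [hDgdef, ← integral_smul]
      congr 1; ext t; rw [smul_smul]
    have e3 : (H * G) • Df = ∫ t, ((H * G) * (K.indicator f t - f x)) • Φ' t := by
      rw [hDfdef, ← integral_smul]
      congr 1; ext t; rw [smul_smul]
    set E : En n → ℝ := fun t =>
      (K.indicator (fun y => f y * g y * h y) t - f x * g x * h x)
        - (F * G) * (K.indicator h t - h x)
        - (H * F) * (K.indicator g t - g x)
        - (H * G) * (K.indicator f t - f x) with hEdef
    have Q3' : Integrable (fun t => (K.indicator (fun y => f y * g y * h y) t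
        - f x * g x * h x) • Φ' t) := Q3
    have hsum : Dq - ((F * G) • Dh + H • (F • Dg + G • Df))
        = ∫ t, E t • Φ' t := by
      have hsm : H • (F • Dg + G • Df) = (H * F) • Dg + (H * G) • Df := by
        rw [smul_add, smul_smul, smul_smul]
      rw [hsm, e1, e2, e3]
      have hrhs : ∀ t, E t • Φ' t
          = (K.indicator (fun y => f y * g y * h y) t - f x * g x * h x) • Φ' t
            - ((F * G) * (K.indicator h t - h x)) • Φ' t
            - ((H * F) * (K.indicator g t - g x)) • Φ' t
            - ((H * G) * (K.indicator f t - f x)) • Φ' t := by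
        intro t; simp only [hEdef, sub_smul]
      rw [integral_congr_ae (Filter.Eventually.of_forall hrhs)]
      have j1 : Integrable (fun t =>
          (K.indicator (fun y => f y * g y * h y) t - f x * g x * h x) • Φ' t
            - ((F * G) * (K.indicator h t - h x)) • Φ' t) := Q3'.sub i1
      have j2 : Integrable (fun t =>
          (K.indicator (fun y => f y * g y * h y) t - f x * g x * h x) • Φ' t
            - ((F * G) * (K.indicator h t - h x)) • Φ' t
            - ((H * F) * (K.indicator g t - g x)) • Φ' t) := j1.sub i2
      rw [integral_sub j2 i3, integral_sub j1 i2, integral_sub Q3' i1, ← hDqdef]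
      abel
    rw [hsum]
    -- pointwise bound
    have hballK : closedBall x ε ⊆ K := hxK x (mem_ball_self hr)
    have hptw : ∀ t, ‖E t • Φ' t‖ ≤ (9 * M ^ 3 * (u * u)) * ‖Φ' t‖ := by
      intro t
      by_cases hz : Φ' t = 0
      · simp [hz]
      · have hts : x - t ∈ Function.support (fderiv ℝ φ) := hz
        have h1 : x - t ∈ tsupport φ := support_fderiv_subset ℝ hts
        have h2 : ‖x - t‖ ≤ ε := by
          have := tsupport_phi hψ hε h1
          simpa [mem_closedBall, dist_zero_right] using this
        have htK : t ∈ K := hballK (by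
          simp only [mem_closedBall, dist_eq_norm]
          rw [norm_sub_rev]; exact h2)
        have htΩ : t ∈ Ω := hKΩ htK
        have htxα : ‖t - x‖ ^ α ≤ u := by
          rw [hudef]
          apply Real.rpow_le_rpow (norm_nonneg _) _ hα0.le
          rw [norm_sub_rev]; exact h2
        have hft : |f t - f x| ≤ M * u :=
          (hf.2 t htΩ x hxΩ).trans (mul_le_mul_of_nonneg_left htxα hM)
        have hgt : |g t - g x| ≤ M * u :=
          (hg.2 t htΩ x hxΩ).trans (mul_le_mul_of_nonneg_left htxα hM)
        have hht : |h t - h x| ≤ M * u :=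
          (hh.2 t htΩ x hxΩ).trans (mul_le_mul_of_nonneg_left htxα hM)
        have hhH : |h t - H| ≤ M * u + M * u :=
          (abs_sub_le (h t) (h x) H).trans
            (add_le_add hht (by rw [abs_sub_comm]; exact Ph2))
        have hgG : |g t - G| ≤ M * u + M * u :=
          (abs_sub_le (g t) (g x) G).trans
            (add_le_add hgt (by rw [abs_sub_comm]; exact Pg2))
        have hgh : |g t * h t - G * H| ≤ M * (M * u + M * u) + M * (M * u + M * u) := by
          have hid : g t * h t - G * H = g t * (h t - H) + H * (g t - G) := by ring
          rw [hid]
          exact (abs_add_le _ _).trans (add_le_add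
            (abs_mul_le' (hg.1 t htΩ) hhH) (abs_mul_le' Ph1 hgG))
        have hfh : |f x * h t - F * H| ≤ M * (M * u + M * u) + M * (M * u) := by
          have hid : f x * h t - F * H = f x * (h t - H) + H * (f x - F) := by ring
          rw [hid]
          exact (abs_add_le _ _).trans (add_le_add
            (abs_mul_le' (hf.1 x hxΩ) hhH)
            (abs_mul_le' Ph1 (by rw [abs_sub_comm]; exact Pf2)))
        have hfg : |f x * g x - F * G| ≤ M * (M * u) + M * (M * u) := by
          have hid : f x * g x - F * G = f x * (g x - G) + G * (f x - F) := by ring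
          rw [hid]
          exact (abs_add_le _ _).trans (add_le_add
            (abs_mul_le' (hf.1 x hxΩ) (by rw [abs_sub_comm]; exact Pg2))
            (abs_mul_le' Pg1 (by rw [abs_sub_comm]; exact Pf2)))
        have hEbnd : |E t| ≤ 9 * M ^ 3 * (u * u) := by
          have hEval : E t = (f t - f x) * (g t * h t - G * H)
              + (g t - g x) * (f x * h t - F * H)
              + (h t - h x) * (f x * g x - F * G) := by
            rw [hEdef]
            simp only [Set.indicator_of_mem htK]
            ring
          rw [hEval]
          calc |(f t - f x) * (g t * h t - G * H)
              + (g t - g x) * (f x * h t - F * H)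
              + (h t - h x) * (f x * g x - F * G)|
              ≤ |(f t - f x) * (g t * h t - G * H)|
                + |(g t - g x) * (f x * h t - F * H)|
                + |(h t - h x) * (f x * g x - F * G)| := by
                exact (abs_add_le _ _).trans (by gcongr; exact abs_add_le _ _)
          _ ≤ (M * u) * (M * (M * u + M * u) + M * (M * u + M * u))
                + (M * u) * (M * (M * u + M * u) + M * (M * u))
                + (M * u) * (M * (M * u) + M * (M * u)) := by
                gcongr ?_ + ?_ + ?_
                · exact abs_mul_le' hft hgh
                · exact abs_mul_le' hgt hfh
                · exact abs_mul_le' hht hfg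
          _ = 9 * M ^ 3 * (u * u) := by ring
        rw [norm_smul, Real.norm_eq_abs]
        exact mul_le_mul_of_nonneg_right hEbnd (norm_nonneg _)
    have hΦnorm : (∫ t, ‖Φ' t‖) = ε⁻¹ * Cψ := by
      rw [hΦdef]
      rw [integral_sub_left_eq_self (fun z => ‖fderiv ℝ φ z‖) volume x]
      exact integral_norm_fderiv_phi hψ hε
    have hεarith : 9 * M ^ 3 * (u * u) * (ε⁻¹ * Cψ) = 9 * M ^ 3 * Cψ * ε ^ (2*α - 1) := by
      have hinv : ε⁻¹ = ε ^ (-1 : ℝ) := by rw [Real.rpow_neg hε.le, Real.rpow_one]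
      have huu : u * u * ε⁻¹ = ε ^ (2*α - 1) := by
        rw [hudef, hinv, ← Real.rpow_add hε, ← Real.rpow_add hε]
        congr 1; ring
      calc 9 * M ^ 3 * (u * u) * (ε⁻¹ * Cψ) = 9 * M ^ 3 * Cψ * (u * u * ε⁻¹) := by ring
      _ = 9 * M ^ 3 * Cψ * ε ^ (2*α - 1) := by rw [huu]
    calc ‖∫ t, E t • Φ' t‖ ≤ ∫ t, (9 * M ^ 3 * (u * u)) * ‖Φ' t‖ :=
          norm_integral_le_of_norm_le (hnorm_int.const_mul _)
            (Filter.Eventually.of_forall hptw)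
    _ = 9 * M ^ 3 * (u * u) * ∫ t, ‖Φ' t‖ := integral_const_mul _ _
    _ = 9 * M ^ 3 * Cψ * ε ^ (2*α - 1) := by rw [hΦnorm, hεarith]
    _ ≤ (6 * M ^ 3 + 9 * M ^ 3 * Cψ) * ε ^ (2*α - 1) := by
          nlinarith [mul_nonneg (mul_nonneg (by norm_num : (0:ℝ) ≤ 6)
            (pow_nonneg hM 3)) hε2α]
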